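/- The function d_F(g₁,g₂) = (v₁ + e₁) + (v₂ + e₂) − 2·(v₁₂ₛ + e₁₂ₛ) is a metric on the set of finite graphs with isomorphic graphs identified, where vᵢ and eᵢ are the numbers of vertices and edges of gᵢ, and (v₁₂ₛ + e₁₂ₛ) is the maximum, over all graphs h subgraph isomorphic to both g₁ and g₂, of the number of vertices of h plus the number of edges of h. -/
import Mathlib


/-- A finite labeled graph with vertex labels in `LV` and edge labels in `LE`.
Vertices are drawn from `ℕ`; label functions are total on `ℕ` resp. `Sym2 ℕ`
(only the values on actual vertices and edges are relevant). -/
structure LGraph (LV LE : Type) where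
  verts : Finset ℕ
  edges : Finset (Sym2 ℕ)
  edges_sub : ∀ e ∈ edges, ∀ v ∈ e, v ∈ verts
  edges_nodiag : ∀ e ∈ edges, ¬ e.IsDiag
  ℓV : ℕ → LV
  ℓE : Sym2 ℕ → LE

/-- Label-preserving isomorphism of labeled graphs. -/
def LGraph.Iso {LV LE : Type} (g₁ g₂ : LGraph LV LE) : Prop :=
  ∃ φ : ℕ → ℕ,
    Set.BijOn φ ↑g₁.verts ↑g₂.verts ∧
    (∀ u ∈ g₁.verts, ∀ v ∈ g₁.verts, (s(u, v) ∈ g₁.edges ↔ s(φ u, φ v) ∈ g₂.edges)) ∧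
    (∀ v ∈ g₁.verts, g₂.ℓV (φ v) = g₁.ℓV v) ∧
    (∀ u ∈ g₁.verts, ∀ v ∈ g₁.verts, s(u, v) ∈ g₁.edges →
      g₂.ℓE s(φ u, φ v) = g₁.ℓE s(u, v))

/-- `g'` is a subgraph of `g`: `V' ⊆ V`, `E' ⊆ E ∩ [V']²` (the containment in
`[V']²` being guaranteed by the structure invariant), with agreeing labels. -/
def LGraph.IsSubgraph {LV LE : Type} (g' g : LGraph LV LE) : Prop :=
  g'.verts ⊆ g.verts ∧ g'.edges ⊆ g.edges ∧
  (∀ v ∈ g'.verts, g'.ℓV v = g.ℓV v) ∧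
  (∀ e ∈ g'.edges, g'.ℓE e = g.ℓE e)

/-- `g ⊆ h` (subgraph isomorphism): some subgraph of `h` is isomorphic to `g`. -/
def LGraph.SubIso {LV LE : Type} (g h : LGraph LV LE) : Prop :=
  ∃ g'' : LGraph LV LE, LGraph.IsSubgraph g'' h ∧ LGraph.Iso g'' g

/-- `v₁₂ₛ + e₁₂ₛ`: the maximum, over all graphs `h` subgraph isomorphic to
both `g₁` and `g₂`, of the number of vertices of `h` plus the number of edges
of `h`. -/
noncomputable def ve12s {LV LE : Type} (g₁ g₂ : LGraph LV LE) : ℕ :=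
  sSup {k : ℕ | ∃ h : LGraph LV LE,
    h.SubIso g₁ ∧ h.SubIso g₂ ∧ h.verts.card + h.edges.card = k}

/-- Fernández and Valiente's distance
`d_F(g₁,g₂) = (v₁ + e₁) + (v₂ + e₂) − 2·(v₁₂ₛ + e₁₂ₛ)`. -/
noncomputable def dF {LV LE : Type} (g₁ g₂ : LGraph LV LE) : ℝ :=
  ((g₁.verts.card + g₁.edges.card : ℕ) : ℝ) +
    ((g₂.verts.card + g₂.edges.card : ℕ) : ℝ) - 2 * (ve12s g₁ g₂ : ℝ)
namespace LGraph
variable {LV LE : Type}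

/-- total size of a graph -/
def size (g : LGraph LV LE) : ℕ := g.verts.card + g.edges.card

theorem Iso.refl (g : LGraph LV LE) : g.Iso g := by
  refine ⟨id, Set.bijOn_id _, ?_, ?_, ?_⟩ <;> simp

theorem Iso.symm {g₁ g₂ : LGraph LV LE} (h : g₁.Iso g₂) : g₂.Iso g₁ := by
  obtain ⟨φ, hbij, hedge, hlv, hle⟩ := h
  set ψ := Function.invFunOn φ ↑g₁.verts with hψ
  have hinv : Set.InvOn ψ φ ↑g₁.verts ↑g₂.verts := hbij.invOn_invFunOn
  have hbij' : Set.BijOn ψ ↑g₂.verts ↑g₁.verts := Set.BijOn.symm hinv.symm hbij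
  have hri : ∀ x ∈ g₂.verts, φ (ψ x) = x := fun x hx => hinv.2 hx
  have hmem : ∀ x ∈ g₂.verts, ψ x ∈ g₁.verts := fun x hx => hbij'.mapsTo hx
  refine ⟨ψ, hbij', ?_, ?_, ?_⟩
  · intro u hu v hv
    conv_lhs => rw [← hri u hu, ← hri v hv]
    exact (hedge _ (hmem u hu) _ (hmem v hv)).symm
  · intro v hv
    have := hlv _ (hmem v hv)
    rw [hri v hv] at this
    exact this.symm
  · intro u hu v hv he
    have he' : s(ψ u, ψ v) ∈ g₁.edges := by
      rw [hedge _ (hmem u hu) _ (hmem v hv), hri u hu, hri v hv]; exact he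
    have := hle _ (hmem u hu) _ (hmem v hv) he'
    rw [hri u hu, hri v hv] at this
    exact this.symm

theorem Iso.trans {g₁ g₂ g₃ : LGraph LV LE} (h : g₁.Iso g₂) (h' : g₂.Iso g₃) :
    g₁.Iso g₃ := by
  obtain ⟨φ, hbij, hedge, hlv, hle⟩ := h
  obtain ⟨φ', hbij', hedge', hlv', hle'⟩ := h'
  have hmem : ∀ x ∈ g₁.verts, φ x ∈ g₂.verts := fun x hx => hbij.mapsTo hx
  refine ⟨φ' ∘ φ, hbij'.comp hbij, ?_, ?_, ?_⟩
  · intro u hu v hv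
    rw [hedge _ hu _ hv, hedge' _ (hmem u hu) _ (hmem v hv)]; rfl
  · intro v hv
    simp only [Function.comp_apply]
    rw [hlv' _ (hmem v hv), hlv _ hv]
  · intro u hu v hv he
    have he2 : s(φ u, φ v) ∈ g₂.edges := (hedge _ hu _ hv).mp he
    simp only [Function.comp_apply]
    rw [hle' _ (hmem u hu) _ (hmem v hv) he2, hle _ hu _ hv he]

theorem Iso.card_verts {g₁ g₂ : LGraph LV LE} (h : g₁.Iso g₂) :
    g₁.verts.card = g₂.verts.card := by
  obtain ⟨φ, hbij, -, -, -⟩ := h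
  refine Finset.card_bij (fun a _ => φ a) (fun a ha => hbij.mapsTo ha)
    (fun a ha b hb hab => hbij.injOn ha hb hab) (fun b hb => ?_)
  obtain ⟨a, ha, rfl⟩ := hbij.surjOn hb
  exact ⟨a, ha, rfl⟩

theorem Iso.card_edges {g₁ g₂ : LGraph LV LE} (h : g₁.Iso g₂) :
    g₁.edges.card = g₂.edges.card := by
  obtain ⟨φ, hbij, hedge, -, -⟩ := h
  refine Finset.card_bij (fun e _ => Sym2.map φ e) ?_ ?_ ?_
  · intro e he
    induction e using Sym2.inductionOn with
    | hf a b =>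
      have ha : a ∈ g₁.verts := g₁.edges_sub _ he a (by simp)
      have hb : b ∈ g₁.verts := g₁.edges_sub _ he b (by simp)
      simpa using (hedge a ha b hb).mp he
  · intro e he e' he' heq
    induction e using Sym2.inductionOn with
    | hf a b =>
      induction e' using Sym2.inductionOn with
      | hf c d =>
        have ha : a ∈ g₁.verts := g₁.edges_sub _ he a (by simp)
        have hb : b ∈ g₁.verts := g₁.edges_sub _ he b (by simp)
        have hc : c ∈ g₁.verts := g₁.edges_sub _ he' c (by simp)
        have hd : d ∈ g₁.verts := g₁.edges_sub _ he' d (by simp)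
        simp only [Sym2.map_pair_eq, Sym2.eq_iff] at heq ⊢
        rcases heq with ⟨h1, h2⟩ | ⟨h1, h2⟩
        · exact Or.inl ⟨hbij.injOn ha hc h1, hbij.injOn hb hd h2⟩
        · exact Or.inr ⟨hbij.injOn ha hd h1, hbij.injOn hb hc h2⟩
  · intro e he
    induction e using Sym2.inductionOn with
    | hf x y =>
      have hx : x ∈ g₂.verts := g₂.edges_sub _ he x (by simp)
      have hy : y ∈ g₂.verts := g₂.edges_sub _ he y (by simp)
      obtain ⟨u, hu, rfl⟩ := hbij.surjOn hx
      obtain ⟨v, hv, rfl⟩ := hbij.surjOn hy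
      exact ⟨s(u, v), (hedge u hu v hv).mpr he, by simp [Sym2.map_pair_eq]⟩

theorem Iso.size_eq {g₁ g₂ : LGraph LV LE} (h : g₁.Iso g₂) : g₁.size = g₂.size := by
  rw [size, size, h.card_verts, h.card_edges]

end LGraph
namespace LGraph
variable {LV LE : Type}

theorem IsSubgraph.refl (g : LGraph LV LE) : g.IsSubgraph g :=
  ⟨subset_rfl, subset_rfl, fun _ _ => rfl, fun _ _ => rfl⟩

theorem IsSubgraph.trans {g₁ g₂ g₃ : LGraph LV LE} (h : g₁.IsSubgraph g₂)
    (h' : g₂.IsSubgraph g₃) : g₁.IsSubgraph g₃ := by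
  obtain ⟨hv, he, hlv, hle⟩ := h
  obtain ⟨hv', he', hlv', hle'⟩ := h'
  exact ⟨hv.trans hv', he.trans he',
    fun v hm => (hlv v hm).trans (hlv' v (hv hm)),
    fun e hm => (hle e hm).trans (hle' e (he hm))⟩

theorem IsSubgraph.size_le {g' g : LGraph LV LE} (h : g'.IsSubgraph g) :
    g'.size ≤ g.size :=
  Nat.add_le_add (Finset.card_le_card h.1) (Finset.card_le_card h.2.1)

theorem SubIso.refl (g : LGraph LV LE) : g.SubIso g :=
  ⟨g, IsSubgraph.refl g, Iso.refl g⟩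

theorem SubIso.size_le {h g : LGraph LV LE} (hs : h.SubIso g) : h.size ≤ g.size := by
  obtain ⟨g'', hsub, hiso⟩ := hs
  calc h.size = g''.size := hiso.size_eq.symm
    _ ≤ g.size := hsub.size_le

theorem Iso.subIso {g₁ g₂ : LGraph LV LE} (h : g₁.Iso g₂) : g₁.SubIso g₂ :=
  ⟨g₂, IsSubgraph.refl g₂, h.symm⟩

/-- Transport a subgraph through an isomorphism. -/
theorem iso_image {h k h' : LGraph LV LE} (hiso : h.Iso k) (hsub : h'.IsSubgraph h) :
    ∃ k' : LGraph LV LE, k'.IsSubgraph k ∧ k'.Iso h' := by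
  obtain ⟨ψ, hbij, hedge, hlv, hle⟩ := hiso
  obtain ⟨hv, he, hlv', hle'⟩ := hsub
  have hmem : ∀ x ∈ h'.verts, ψ x ∈ k.verts := fun x hx => hbij.mapsTo (hv hx)
  refine ⟨⟨h'.verts.image ψ, h'.edges.image (Sym2.map ψ), ?_, ?_, k.ℓV, k.ℓE⟩, ?_, ?_⟩
  · intro e heim v hve
    simp only [Finset.mem_image] at heim ⊢
    obtain ⟨e₀, he₀, rfl⟩ := heim
    rw [Sym2.mem_map] at hve
    obtain ⟨w, hw, rfl⟩ := hve
    exact ⟨w, h'.edges_sub _ he₀ w hw, rfl⟩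
  · intro e heim hdiag
    simp only [Finset.mem_image] at heim
    obtain ⟨e₀, he₀, rfl⟩ := heim
    induction e₀ using Sym2.inductionOn with
    | hf a b =>
      have ha : a ∈ h'.verts := h'.edges_sub _ he₀ a (by simp)
      have hb : b ∈ h'.verts := h'.edges_sub _ he₀ b (by simp)
      rw [Sym2.map_pair_eq, Sym2.mk_isDiag_iff] at hdiag
      have : a = b := hbij.injOn (hv ha) (hv hb) hdiag
      exact h'.edges_nodiag _ he₀ (by rw [Sym2.mk_isDiag_iff]; exact this)
  · -- IsSubgraph of k
    refine ⟨?_, ?_, fun _ _ => rfl, fun _ _ => rfl⟩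
    · intro x hx
      simp only [Finset.mem_image] at hx
      obtain ⟨w, hw, rfl⟩ := hx
      exact hmem w hw
    · intro e heim
      simp only [Finset.mem_image] at heim
      obtain ⟨e₀, he₀, rfl⟩ := heim
      induction e₀ using Sym2.inductionOn with
      | hf a b =>
        have ha : a ∈ h'.verts := h'.edges_sub _ he₀ a (by simp)
        have hb : b ∈ h'.verts := h'.edges_sub _ he₀ b (by simp)
        rw [Sym2.map_pair_eq]
        exact (hedge a (hv ha) b (hv hb)).mp (he he₀)
  · -- Iso to h' : build Iso h' k' first, then symm
    refine Iso.symm ⟨ψ, ?_, ?_, ?_, ?_⟩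
    · simp only [Finset.coe_image]
      exact (hbij.injOn.mono (by exact_mod_cast hv)).bijOn_image
    · intro u hu v hv'
      constructor
      · intro hin
        exact Finset.mem_image.mpr ⟨s(u, v), hin, by rw [Sym2.map_pair_eq]⟩
      · intro hin
        simp only [Finset.mem_image] at hin
        obtain ⟨e₀, he₀, heq⟩ := hin
        induction e₀ using Sym2.inductionOn with
        | hf a b =>
          have ha : a ∈ h'.verts := h'.edges_sub _ he₀ a (by simp)
          have hb : b ∈ h'.verts := h'.edges_sub _ he₀ b (by simp)
          rw [Sym2.map_pair_eq, Sym2.eq_iff] at heq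
          rcases heq with ⟨h1, h2⟩ | ⟨h1, h2⟩
          · rw [← hbij.injOn (hv ha) (hv hu) h1, ← hbij.injOn (hv hb) (hv hv') h2]
            exact he₀
          · rw [← hbij.injOn (hv ha) (hv hv') h1, ← hbij.injOn (hv hb) (hv hu) h2,
              Sym2.eq_swap]
            exact he₀
    · intro v hv'
      show k.ℓV (ψ v) = h'.ℓV v
      rw [hlv _ (hv hv'), hlv' _ hv']
    · intro u hu v hv' hin
      show k.ℓE s(ψ u, ψ v) = h'.ℓE s(u, v)
      rw [hle _ (hv hu) _ (hv hv') (he hin), hle' _ hin]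

theorem IsSubgraph.subIso {h' h g : LGraph LV LE} (hsub : h'.IsSubgraph h)
    (hsi : h.SubIso g) : h'.SubIso g := by
  obtain ⟨g'', hg''sub, hg''iso⟩ := hsi
  obtain ⟨k', hk'sub, hk'iso⟩ := iso_image hg''iso.symm hsub
  exact ⟨k', hk'sub.trans hg''sub, hk'iso⟩

end LGraph
namespace LGraph
variable {LV LE : Type}

/-- The empty graph with labels borrowed from `g`. -/
def emptyOf (g : LGraph LV LE) : LGraph LV LE :=
  ⟨∅, ∅, by simp, by simp, g.ℓV, g.ℓE⟩

theorem emptyOf_subIso (g g' : LGraph LV LE) : (g.emptyOf).SubIso g' := by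
  refine ⟨g'.emptyOf, ⟨by simp [emptyOf], by simp [emptyOf], ?_, ?_⟩,
    ⟨id, ?_, ?_, ?_, ?_⟩⟩ <;> simp [emptyOf]

theorem SubIso.congr {h h' g : LGraph LV LE} (hs : h.SubIso g) (hi : h.Iso h') :
    h'.SubIso g := by
  obtain ⟨x, xs, xi⟩ := hs
  exact ⟨x, xs, xi.trans hi⟩

/-- A full-size common subgraph witness yields an isomorphism. -/
theorem iso_of_subIso_size {h g : LGraph LV LE} (hsi : h.SubIso g)
    (hsize : g.size ≤ h.size) : g.Iso h := by
  obtain ⟨g'', ⟨hv, he, hlv, hle⟩, hiso⟩ := hsi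
  have h1 : g''.verts.card ≤ g.verts.card := Finset.card_le_card hv
  have h2 : g''.edges.card ≤ g.edges.card := Finset.card_le_card he
  have hsz : g.size ≤ g''.size := hsize.trans_eq hiso.size_eq.symm
  unfold size at hsz
  have hvc : g''.verts = g.verts := Finset.eq_of_subset_of_card_le hv (by omega)
  have hec : g''.edges = g.edges := Finset.eq_of_subset_of_card_le he (by omega)
  obtain ⟨φ, hbij, hedge, hlv2, hle2⟩ := hiso
  refine ⟨φ, by rw [← hvc]; exact hbij, ?_, ?_, ?_⟩
  · intro u hu v hv'
    rw [← hec]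
    exact hedge u (hvc.symm ▸ hu) v (hvc.symm ▸ hv')
  · intro v hv'
    rw [hlv2 v (hvc.symm ▸ hv'), hlv v (hvc.symm ▸ hv')]
  · intro u hu v hv' hin
    rw [hle2 u (hvc.symm ▸ hu) v (hvc.symm ▸ hv') (hec.symm ▸ hin),
      hle _ (hec.symm ▸ hin)]

theorem ve12s_nonempty (g₁ g₂ : LGraph LV LE) :
    {k : ℕ | ∃ h : LGraph LV LE,
      h.SubIso g₁ ∧ h.SubIso g₂ ∧ h.verts.card + h.edges.card = k}.Nonempty :=
  ⟨0, g₁.emptyOf, emptyOf_subIso _ _, emptyOf_subIso _ _, by simp [emptyOf]⟩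

theorem ve12s_bdd (g₁ g₂ : LGraph LV LE) :
    BddAbove {k : ℕ | ∃ h : LGraph LV LE,
      h.SubIso g₁ ∧ h.SubIso g₂ ∧ h.verts.card + h.edges.card = k} := by
  refine ⟨g₁.size, fun k hk => ?_⟩
  obtain ⟨h, h1, -, hk⟩ := hk
  exact hk ▸ h1.size_le

theorem ve12s_le_left (g₁ g₂ : LGraph LV LE) : ve12s g₁ g₂ ≤ g₁.size := by
  refine csSup_le (ve12s_nonempty g₁ g₂) fun k hk => ?_
  obtain ⟨h, h1, -, hk⟩ := hk
  exact hk ▸ h1.size_le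

theorem ve12s_comm (g₁ g₂ : LGraph LV LE) : ve12s g₁ g₂ = ve12s g₂ g₁ := by
  unfold ve12s
  congr 1
  ext k
  exact ⟨fun ⟨h, a, b, c⟩ => ⟨h, b, a, c⟩, fun ⟨h, a, b, c⟩ => ⟨h, b, a, c⟩⟩

theorem ve12s_le_right (g₁ g₂ : LGraph LV LE) : ve12s g₁ g₂ ≤ g₂.size :=
  (ve12s_comm g₁ g₂) ▸ ve12s_le_left g₂ g₁

theorem le_ve12s {h : LGraph LV LE} (g₁ g₂ : LGraph LV LE) (h1 : h.SubIso g₁)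
    (h2 : h.SubIso g₂) : h.size ≤ ve12s g₁ g₂ :=
  le_csSup (ve12s_bdd g₁ g₂) ⟨h, h1, h2, rfl⟩

theorem ve12s_attained (g₁ g₂ : LGraph LV LE) :
    ∃ h : LGraph LV LE, h.SubIso g₁ ∧ h.SubIso g₂ ∧ h.size = ve12s g₁ g₂ := by
  have := Nat.sSup_mem (ve12s_nonempty g₁ g₂) (ve12s_bdd g₁ g₂)
  obtain ⟨h, h1, h2, hk⟩ := this
  exact ⟨h, h1, h2, hk⟩

theorem ve12s_triangle (g₁ g₂ g₃ : LGraph LV LE) :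
    ve12s g₁ g₂ + ve12s g₂ g₃ ≤ g₂.size + ve12s g₁ g₃ := by
  obtain ⟨A, hA1, hA2, hAsz⟩ := ve12s_attained g₁ g₂
  obtain ⟨B, hB2, hB3, hBsz⟩ := ve12s_attained g₂ g₃
  obtain ⟨A'', hAsub, hAiso⟩ := hA2
  obtain ⟨B'', hBsub, hBiso⟩ := hB2
  -- the intersection of A'' and B'' inside g₂
  have hkey : ∃ C : LGraph LV LE, C.IsSubgraph A'' ∧ C.IsSubgraph B'' ∧
      A''.size + B''.size ≤ g₂.size + C.size := by
    refine ⟨⟨A''.verts ∩ B''.verts, A''.edges ∩ B''.edges, ?_, ?_, g₂.ℓV, g₂.ℓE⟩,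
      ⟨Finset.inter_subset_left, Finset.inter_subset_left,
        fun v hv => (hAsub.2.2.1 v (Finset.mem_inter.mp hv).1).symm,
        fun e he => (hAsub.2.2.2 e (Finset.mem_inter.mp he).1).symm⟩,
      ⟨Finset.inter_subset_right, Finset.inter_subset_right,
        fun v hv => (hBsub.2.2.1 v (Finset.mem_inter.mp hv).2).symm,
        fun e he => (hBsub.2.2.2 e (Finset.mem_inter.mp he).2).symm⟩, ?_⟩
    · intro e he v hv
      exact Finset.mem_inter.mpr
        ⟨A''.edges_sub e (Finset.mem_inter.mp he).1 v hv,
         B''.edges_sub e (Finset.mem_inter.mp he).2 v hv⟩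
    · exact fun e he => A''.edges_nodiag e (Finset.mem_inter.mp he).1
    · show A''.size + B''.size ≤ g₂.size +
        ((A''.verts ∩ B''.verts).card + (A''.edges ∩ B''.edges).card)
      have hv1 := Finset.card_inter_add_card_union A''.verts B''.verts
      have he1 := Finset.card_inter_add_card_union A''.edges B''.edges
      have hv2 : (A''.verts ∪ B''.verts).card ≤ g₂.verts.card :=
        Finset.card_le_card (Finset.union_subset hAsub.1 hBsub.1)
      have he2 : (A''.edges ∪ B''.edges).card ≤ g₂.edges.card :=
        Finset.card_le_card (Finset.union_subset hAsub.2.1 hBsub.2.1)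
      unfold size
      omega
  obtain ⟨C, hCA, hCB, hCsz⟩ := hkey
  have hA''g₁ : A''.SubIso g₁ := hA1.congr hAiso.symm
  have hB''g₃ : B''.SubIso g₃ := hB3.congr hBiso.symm
  have hC1 : C.SubIso g₁ := hCA.subIso hA''g₁
  have hC3 : C.SubIso g₃ := hCB.subIso hB''g₃
  have hCle : C.size ≤ ve12s g₁ g₃ := le_ve12s g₁ g₃ hC1 hC3
  have hAeq : A''.size = ve12s g₁ g₂ := hAiso.size_eq.trans hAsz
  have hBeq : B''.size = ve12s g₂ g₃ := hBiso.size_eq.trans hBsz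
  omega

end LGraph
/-- `d_F` is a metric on the set of finite graphs with
isomorphic graphs identified: nonnegative, vanishing on isomorphic pairs
(in particular `d_F(g,g) = 0`), symmetric, satisfying the triangle
inequality, and separating points up to isomorphism. -/
theorem dF_is_metric (LV LE : Type) :
    (∀ g₁ g₂ : LGraph LV LE, 0 ≤ dF g₁ g₂) ∧
    (∀ g : LGraph LV LE, dF g g = 0) ∧
    (∀ g₁ g₂ : LGraph LV LE, g₁.Iso g₂ → dF g₁ g₂ = 0) ∧
    (∀ g₁ g₂ : LGraph LV LE, dF g₁ g₂ = dF g₂ g₁) ∧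
    (∀ g₁ g₂ g₃ : LGraph LV LE, dF g₁ g₃ ≤ dF g₁ g₂ + dF g₂ g₃) ∧
    (∀ g₁ g₂ : LGraph LV LE, dF g₁ g₂ = 0 → g₁.Iso g₂) := by
  have hsize : ∀ g : LGraph LV LE, g.verts.card + g.edges.card = g.size := fun g => rfl
  have hiso0 : ∀ g₁ g₂ : LGraph LV LE, g₁.Iso g₂ → dF g₁ g₂ = 0 := by
    intro g₁ g₂ hiso
    have h1 : g₁.size ≤ ve12s g₁ g₂ :=
      LGraph.le_ve12s g₁ g₂ (LGraph.SubIso.refl g₁) hiso.subIso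
    have h2 : ve12s g₁ g₂ ≤ g₁.size := LGraph.ve12s_le_left g₁ g₂
    have heq : ve12s g₁ g₂ = g₁.size := le_antisymm h2 h1
    have hsz : g₂.size = g₁.size := hiso.size_eq.symm
    unfold dF
    rw [hsize, hsize, heq, hsz]
    ring
  refine ⟨?_, ?_, hiso0, ?_, ?_, ?_⟩
  · intro g₁ g₂
    have h1 : ve12s g₁ g₂ ≤ g₁.size := LGraph.ve12s_le_left g₁ g₂
    have h2 : ve12s g₁ g₂ ≤ g₂.size := LGraph.ve12s_le_right g₁ g₂
    unfold dF
    rw [hsize, hsize]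
    have c1 : (ve12s g₁ g₂ : ℝ) ≤ (g₁.size : ℝ) := by exact_mod_cast h1
    have c2 : (ve12s g₁ g₂ : ℝ) ≤ (g₂.size : ℝ) := by exact_mod_cast h2
    linarith
  · exact fun g => hiso0 g g (LGraph.Iso.refl g)
  · intro g₁ g₂
    unfold dF
    rw [LGraph.ve12s_comm g₁ g₂]
    ring
  · intro g₁ g₂ g₃
    have := LGraph.ve12s_triangle g₁ g₂ g₃
    have hc : (ve12s g₁ g₂ : ℝ) + (ve12s g₂ g₃ : ℝ) ≤ (g₂.size : ℝ) + (ve12s g₁ g₃ : ℝ) := by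
      exact_mod_cast this
    unfold dF
    rw [hsize, hsize, hsize]
    linarith
  · intro g₁ g₂ h0
    unfold dF at h0
    rw [hsize, hsize] at h0
    have h1 : ve12s g₁ g₂ ≤ g₁.size := LGraph.ve12s_le_left g₁ g₂
    have h2 : ve12s g₁ g₂ ≤ g₂.size := LGraph.ve12s_le_right g₁ g₂
    have hnat : g₁.size + g₂.size = 2 * ve12s g₁ g₂ := by
      have : ((g₁.size + g₂.size : ℕ) : ℝ) = ((2 * ve12s g₁ g₂ : ℕ) : ℝ) := by
        push_cast
        linarith
      exact_mod_cast this
    have hv1 : ve12s g₁ g₂ = g₁.size := by omega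
    have hv2 : ve12s g₁ g₂ = g₂.size := by omega
    obtain ⟨h, hs1, hs2, hsz⟩ := LGraph.ve12s_attained g₁ g₂
    have i1 : g₁.Iso h := LGraph.iso_of_subIso_size hs1 (by omega)
    have i2 : g₂.Iso h := LGraph.iso_of_subIso_size hs2 (by omega)
    exact i1.trans i2.symm
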